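/- arXiv:2209.03942 — 3 statements merged into one kernel-verified Lean document; each statement's English description precedes it below -/
import Mathlib

section
/- Let n₀ > 0, m > 0, k ≥ 0 be real numbers and set n_t := n₀ + t·(m+k) for each natural number t. Let δ : ℕ → ℝ be nonnegative and nonincreasing, and let β, γ : ℕ → ℝ be sequences such that for every t ≥ 1, β_t = (n_{t-1}/n_t)·β_{t-1} + (m/n_t)·β₀ + (k/n_t)·γ_{t-1}, and such that |β_t − γ_t| ≤ δ_t for every t ≥ 0. Then for every t, |β₀ − γ_t| ≤ (1 + Σ_{i=1}^{t} (k/n_i) · Π_{j=i+1}^{t} (n_j − m)/n_j) · δ₀. -/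
/-!
The gap `e t = |β 0 - β t|` obeys the contraction-type recursion
`e (t+1) ≤ (n (t+1) - m) / n (t+1) * e t + k / n (t+1) * δ 0`: the fresh human samples pull `β`
back towards `β 0`, while the model-annotated samples contribute at most the gap plus the
calibration error. Unrolling this discrete Grönwall inequality from `e 0 = 0` bounds `e t` by the
sum in the statement, and one more triangle inequality passes from `β t` to `γ t`.
-/

open Finset

section DiscreteGronwall

variable {R : Type*} [CommSemiring R]

theorem sum_Icc_mul_prod_Icc_succ (a b : ℕ → R) (t : ℕ) :
    ∑ i ∈ Icc 1 (t + 1), b i * ∏ j ∈ Icc (i + 1) (t + 1), a j =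
      a (t + 1) * ∑ i ∈ Icc 1 t, b i * ∏ j ∈ Icc (i + 1) t, a j + b (t + 1) := by
  rw [sum_Icc_succ_top (by omega), Icc_eq_empty_of_lt (Nat.lt_succ_self (t + 1)), prod_empty,
    mul_one, mul_sum]
  congr 1
  refine sum_congr rfl fun i hi => ?_
  rw [prod_Icc_succ_top (by simp only [mem_Icc] at hi; omega)]
  ring

theorem le_sum_mul_prod_of_le_mul_add [PartialOrder R] [IsOrderedRing R] {e a b : ℕ → R}
    (ha : ∀ t, 0 ≤ a (t + 1)) (he : e 0 ≤ 0)
    (hstep : ∀ t, e (t + 1) ≤ a (t + 1) * e t + b (t + 1)) (t : ℕ) :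
    e t ≤ ∑ i ∈ Icc 1 t, b i * ∏ j ∈ Icc (i + 1) t, a j := by
  induction t with
  | zero => simpa using he
  | succ t ih =>
    rw [sum_Icc_mul_prod_Icc_succ]
    calc e (t + 1) ≤ a (t + 1) * e t + b (t + 1) := hstep t
      _ ≤ _ := by gcongr; exact ha t

end DiscreteGronwall

section Feedback

variable {m k : ℝ} {n β γ : ℕ → ℝ} {t : ℕ}

theorem feedback_gap_succ (hnt : n (t + 1) ≠ 0) (hsucc : n (t + 1) = n t + (m + k))
    (hβ : β (t + 1) = n t / n (t + 1) * β t + m / n (t + 1) * β 0 + k / n (t + 1) * γ t) :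
    β 0 - β (t + 1) = n t / n (t + 1) * (β 0 - β t) + k / n (t + 1) * (β 0 - γ t) := by
  rw [hβ]
  field_simp
  linear_combination β 0 * hsucc

theorem abs_feedback_gap_succ_le {d : ℝ} (hk : 0 ≤ k) (hnt : 0 ≤ n t) (hnt' : 0 < n (t + 1))
    (hsucc : n (t + 1) = n t + (m + k))
    (hβ : β (t + 1) = n t / n (t + 1) * β t + m / n (t + 1) * β 0 + k / n (t + 1) * γ t)
    (hcal : |β t - γ t| ≤ d) :
    |β 0 - β (t + 1)| ≤ (n (t + 1) - m) / n (t + 1) * |β 0 - β t| + k / n (t + 1) * d := by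
  calc |β 0 - β (t + 1)|
      = |n t / n (t + 1) * (β 0 - β t) + k / n (t + 1) * (β 0 - γ t)| := by
        rw [feedback_gap_succ hnt'.ne' hsucc hβ]
    _ ≤ n t / n (t + 1) * |β 0 - β t| + k / n (t + 1) * |β 0 - γ t| := by
        grw [abs_add_le, abs_mul, abs_mul, abs_of_nonneg (by positivity : 0 ≤ n t / n (t + 1)),
          abs_of_nonneg (by positivity : 0 ≤ k / n (t + 1))]
    _ ≤ n t / n (t + 1) * |β 0 - β t| + k / n (t + 1) * (|β 0 - β t| + d) := by
        grw [abs_sub_le (β 0) (β t) (γ t), hcal]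
    _ = (n (t + 1) - m) / n (t + 1) * |β 0 - β t| + k / n (t + 1) * d := by
        rw [hsucc]
        ring

end Feedback

theorem feedback_stability_sum_bound_general
    (n₀ m k : ℝ) (hn₀ : 0 < n₀) (hm : 0 < m) (hk : 0 ≤ k)
    (n : ℕ → ℝ) (hn : ∀ t : ℕ, n t = n₀ + t * (m + k))
    (δ β γ : ℕ → ℝ)
    (hδ_mono : ∀ s t : ℕ, s ≤ t → δ t ≤ δ s)
    (hβ : ∀ t : ℕ, 1 ≤ t →
      β t = (n (t - 1) / n t) * β (t - 1) + (m / n t) * β 0 + (k / n t) * γ (t - 1))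
    (hcal : ∀ t : ℕ, |β t - γ t| ≤ δ t) :
    ∀ t : ℕ, |β 0 - γ t| ≤
      (1 + ∑ i ∈ Finset.Icc 1 t, (k / n i) * ∏ j ∈ Finset.Icc (i + 1) t, (n j - m) / n j)
        * δ 0 := by
  have hpos (t : ℕ) : 0 < n t := by rw [hn]; positivity
  have hsucc (t : ℕ) : n (t + 1) = n t + (m + k) := by rw [hn, hn]; push_cast; ring
  have hcal₀ (t : ℕ) : |β t - γ t| ≤ δ 0 := (hcal t).trans (hδ_mono 0 t t.zero_le)
  have hgap (t : ℕ) := le_sum_mul_prod_of_le_mul_add (e := fun t => |β 0 - β t|)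
    (a := fun j => (n j - m) / n j) (b := fun i => k / n i * δ 0)
    (fun t => div_nonneg (by linarith [hsucc t, hpos t]) (hpos (t + 1)).le) (by simp)
    (fun t => abs_feedback_gap_succ_le hk (hpos t).le (hpos (t + 1)) (hsucc t)
      (by simpa using hβ (t + 1) (by omega)) (hcal₀ t)) t
  intro t
  calc |β 0 - γ t| ≤ |β 0 - β t| + |β t - γ t| := abs_sub_le _ _ _
    _ ≤ (∑ i ∈ Icc 1 t, k / n i * ∏ j ∈ Icc (i + 1) t, (n j - m) / n j) * δ 0 + δ 0 := by
        grw [hgap t, hcal₀ t, sum_mul]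
        simp only [mul_right_comm, le_refl]
    _ = _ := by ring

theorem feedback_stability_sum_bound
    (n₀ m k : ℝ) (hn₀ : 0 < n₀) (hm : 0 < m) (hk : 0 ≤ k)
    (n : ℕ → ℝ) (hn : ∀ t : ℕ, n t = n₀ + t * (m + k))
    (δ β γ : ℕ → ℝ)
    (hδ_nonneg : ∀ t, 0 ≤ δ t)
    (hδ_mono : ∀ s t : ℕ, s ≤ t → δ t ≤ δ s)
    (hβ : ∀ t : ℕ, 1 ≤ t →
      β t = (n (t - 1) / n t) * β (t - 1) + (m / n t) * β 0 + (k / n t) * γ (t - 1))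
    (hcal : ∀ t : ℕ, |β t - γ t| ≤ δ t) :
    ∀ t : ℕ, |β 0 - γ t| ≤
      (1 + ∑ i ∈ Finset.Icc 1 t, (k / n i) * ∏ j ∈ Finset.Icc (i + 1) t, (n j - m) / n j)
        * δ 0 :=
  feedback_stability_sum_bound_general n₀ m k hn₀ hm hk n hn δ β γ hδ_mono hβ hcal
end

section
/- Let n₀ > 0, m > 0, k ≥ 0 be real numbers and set n_t := n₀ + t·(m+k) for each natural number t. Let δ : ℕ → ℝ be nonnegative and nonincreasing, and let β, γ : ℕ → ℝ be sequences such that for every t ≥ 1, β_t = (n_{t-1}/n_t)·β_{t-1} + (m/n_t)·β₀ + (k/n_t)·γ_{t-1}, and such that |β_t − γ_t| ≤ δ_t for every t ≥ 0. Then for every t, |β₀ − γ_t| ≤ ((m+k)/m) · δ₀. -/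
/-! The bias drift `βₜ - β₀` is controlled inductively: multiplying the recursion by `nₜ₊₁`
gives `nₜ₊₁ (βₜ₊₁ - β₀) = (nₜ + k)(βₜ - β₀) + k (γₜ - βₜ)`, so the bound `|βₜ - β₀| ≤ (k/m) δ₀`
propagates, because `(nₜ + k)(k/m) + k = nₜ₊₁ (k/m)`. The triangle inequality through `βₜ`
then adds the calibration error `δₜ ≤ δ₀`. -/

lemma mul_mixture_sub_eq {N m k b b₀ g : ℝ} (hN : N + m + k ≠ 0) :
    (N + m + k) * (N / (N + m + k) * b + m / (N + m + k) * b₀ + k / (N + m + k) * g - b₀)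
      = (N + k) * (b - b₀) + k * (g - b) := by
  field_simp
  ring

lemma abs_mixture_sub_le {N m k D b b₀ g b' : ℝ} (hN : 0 < N) (hm : 0 < m) (hk : 0 ≤ k)
    (hb' : b' = N / (N + m + k) * b + m / (N + m + k) * b₀ + k / (N + m + k) * g)
    (hb : |b - b₀| ≤ k / m * D) (hg : |g - b| ≤ D) :
    |b' - b₀| ≤ k / m * D := by
  have hN' : 0 < N + m + k := by linarith
  refine le_of_mul_le_mul_left ?_ hN'
  calc (N + m + k) * |b' - b₀| = |(N + k) * (b - b₀) + k * (g - b)| := by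
        rw [← mul_mixture_sub_eq hN'.ne', ← hb', abs_mul, abs_of_pos hN']
    _ ≤ (N + k) * |b - b₀| + k * |g - b| := by
        refine (abs_add_le _ _).trans_eq ?_
        rw [abs_mul, abs_mul, abs_of_pos (by linarith), abs_of_nonneg hk]
    _ ≤ (N + k) * (k / m * D) + k * D := by gcongr
    _ = (N + m + k) * (k / m * D) := by field_simp; ring

theorem feedback_stability_simplified_bound_general
    (n₀ m k : ℝ) (hn₀ : 0 < n₀) (hm : 0 < m) (hk : 0 ≤ k)
    (n : ℕ → ℝ) (hn : ∀ t : ℕ, n t = n₀ + t * (m + k))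
    (δ β γ : ℕ → ℝ)
    (hδ_mono : ∀ s t : ℕ, s ≤ t → δ t ≤ δ s)
    (hβ : ∀ t : ℕ, 1 ≤ t →
      β t = (n (t - 1) / n t) * β (t - 1) + (m / n t) * β 0 + (k / n t) * γ (t - 1))
    (hcal : ∀ t : ℕ, |β t - γ t| ≤ δ t) :
    ∀ t : ℕ, |β 0 - γ t| ≤ ((m + k) / m) * δ 0 := by
  have hcal₀ (t : ℕ) : |β t - γ t| ≤ δ 0 := (hcal t).trans (hδ_mono 0 t t.zero_le)
  have drift (t : ℕ) : |β t - β 0| ≤ k / m * δ 0 := by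
    induction t with
    | zero =>
      simpa using mul_nonneg (div_nonneg hk hm.le) ((abs_nonneg _).trans (hcal 0))
    | succ s ih =>
      have hn_succ : n (s + 1) = n s + m + k := by rw [hn, hn]; push_cast; ring
      have hn_pos : 0 < n s := by rw [hn]; positivity
      refine abs_mixture_sub_le hn_pos hm hk ?_ ih
        (abs_sub_comm (β s) (γ s) ▸ hcal₀ s)
      simpa [hn_succ] using hβ (s + 1) s.succ_pos
  intro t
  calc |β 0 - γ t| ≤ |β 0 - β t| + |β t - γ t| := abs_sub_le _ _ _
    _ ≤ k / m * δ 0 + δ 0 := add_le_add (abs_sub_comm (β t) (β 0) ▸ drift t) (hcal₀ t)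
    _ = (m + k) / m * δ 0 := by field_simp; ring

theorem feedback_stability_simplified_bound
    (n₀ m k : ℝ) (hn₀ : 0 < n₀) (hm : 0 < m) (hk : 0 ≤ k)
    (n : ℕ → ℝ) (hn : ∀ t : ℕ, n t = n₀ + t * (m + k))
    (δ β γ : ℕ → ℝ)
    (hδ_nonneg : ∀ t, 0 ≤ δ t)
    (hδ_mono : ∀ s t : ℕ, s ≤ t → δ t ≤ δ s)
    (hβ : ∀ t : ℕ, 1 ≤ t →
      β t = (n (t - 1) / n t) * β (t - 1) + (m / n t) * β 0 + (k / n t) * γ (t - 1))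
    (hcal : ∀ t : ℕ, |β t - γ t| ≤ δ t) :
    ∀ t : ℕ, |β 0 - γ t| ≤ ((m + k) / m) * δ 0 :=
  feedback_stability_simplified_bound_general n₀ m k hn₀ hm hk n hn δ β γ hδ_mono hβ hcal
end

section
/- Let X and Y be measurable spaces, μ a probability measure on X, and φ : X × Y → ℝ a bounded measurable function. For a probability measure ν on X and a measurable map f : X → Y, let relabel(ν, f) denote the pushforward of ν under x ↦ (x, f(x)). Let n₀ > 0, m > 0, k ≥ 0 be reals, n_t := n₀ + t·(m+k), let (f_t)_{t≥0} be measurable maps X → Y, let p₀ be a probability measure on X × Y, and define recursively p_t := (n_{t-1}/n_t)·p_{t-1} + (m/n_t)·p₀ + (k/n_t)·relabel(μ, f_{t-1}) for t ≥ 1. Let δ : ℕ → ℝ be nonnegative and nonincreasing, and assume the calibration condition: for every t ≥ 0, |∫ φ dp_t − ∫ φ d(relabel(μ, f_t))| ≤ δ_t. Then for every t, |∫ φ dp₀ − ∫ φ d(relabel(μ, f_t))| ≤ ((m+k)/m) · δ₀. -/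
/-!
Write `a t = ∫ φ ∂p t` and `b t = ∫ φ ∂relabel μ (f t)`. Integrating the mixture recursion
gives `n (s+1) (a 0 - a (s+1)) = (n s + k) (a 0 - a s) + k (a s - b s)`, so the drift
`|a 0 - a t|` stays below `(k / m) δ 0` by induction, because
`(n s + k) (k / m) + k = (k / m) n (s+1)`. Calibration at round `t` costs one more `δ 0`,
and `k / m + 1 = (m + k) / m`.
-/

open MeasureTheory

noncomputable def relabel {X Y : Type*} [MeasurableSpace X] [MeasurableSpace Y]
    (ν : Measure X) (f : X → Y) : Measure (X × Y) :=
  ν.map (fun x => (x, f x))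

instance {X Y : Type*} [MeasurableSpace X] [MeasurableSpace Y] (ν : Measure X) [IsFiniteMeasure ν]
    (f : X → Y) : IsFiniteMeasure (relabel ν f) := by
  unfold relabel
  infer_instance

section FeedbackSequence

variable {n a b : ℕ → ℝ} {m k δ : ℝ}

theorem feedback_drift_le (hn_pos : ∀ t, 0 < n t)
    (hn_succ : ∀ s, n (s + 1) = n s + (m + k)) (hm : 0 < m) (hk : 0 ≤ k)
    (hrec : ∀ s,
      a (s + 1) = n s / n (s + 1) * a s + m / n (s + 1) * a 0 + k / n (s + 1) * b s)
    (hcal : ∀ s, |a s - b s| ≤ δ) (t : ℕ) :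
    |a 0 - a t| ≤ k / m * δ := by
  induction t with
  | zero => simpa using mul_nonneg (div_nonneg hk hm.le) ((abs_nonneg _).trans (hcal 0))
  | succ s ih =>
    have hn₁ : n (s + 1) ≠ 0 := (hn_pos (s + 1)).ne'
    have hwold : 0 ≤ (n s + k) / n (s + 1) := div_nonneg (by linarith [hn_pos s]) (hn_pos _).le
    have hwnew : 0 ≤ k / n (s + 1) := div_nonneg hk (hn_pos _).le
    have hdrift : a 0 - a (s + 1) =
        (n s + k) / n (s + 1) * (a 0 - a s) + k / n (s + 1) * (a s - b s) := by
      rw [hrec s]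
      field_simp
      linear_combination (a 0) * hn_succ s
    calc |a 0 - a (s + 1)|
        ≤ (n s + k) / n (s + 1) * |a 0 - a s| + k / n (s + 1) * |a s - b s| := by
          rw [hdrift]
          refine (abs_add_le _ _).trans_eq ?_
          rw [abs_mul, abs_mul, abs_of_nonneg hwold, abs_of_nonneg hwnew]
      _ ≤ (n s + k) / n (s + 1) * (k / m * δ) + k / n (s + 1) * δ :=
          add_le_add (mul_le_mul_of_nonneg_left ih hwold)
            (mul_le_mul_of_nonneg_left (hcal s) hwnew)
      _ = k / m * δ := by
          field_simp
          linear_combination -(k * δ) * hn_succ s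

theorem feedback_bias_le (hn_pos : ∀ t, 0 < n t)
    (hn_succ : ∀ s, n (s + 1) = n s + (m + k)) (hm : 0 < m) (hk : 0 ≤ k)
    (hrec : ∀ s,
      a (s + 1) = n s / n (s + 1) * a s + m / n (s + 1) * a 0 + k / n (s + 1) * b s)
    (hcal : ∀ s, |a s - b s| ≤ δ) (t : ℕ) :
    |a 0 - b t| ≤ (m + k) / m * δ :=
  calc |a 0 - b t| ≤ |a 0 - a t| + |a t - b t| := abs_sub_le _ _ _
    _ ≤ k / m * δ + δ :=
      add_le_add (feedback_drift_le hn_pos hn_succ hm hk hrec hcal t) (hcal t)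
    _ = (m + k) / m * δ := by field_simp; ring

end FeedbackSequence

section Mixture

variable {Ω : Type*} [MeasurableSpace Ω]

theorem integral_ofReal_smul_add_ofReal_smul_add_ofReal_smul
    {φ : Ω → ℝ} {ν₁ ν₂ ν₃ : Measure Ω}
    (h₁ : Integrable φ ν₁) (h₂ : Integrable φ ν₂) (h₃ : Integrable φ ν₃)
    {c₁ c₂ c₃ : ℝ} (hc₁ : 0 ≤ c₁) (hc₂ : 0 ≤ c₂) (hc₃ : 0 ≤ c₃) :
    ∫ x, φ x ∂(ENNReal.ofReal c₁ • ν₁ + ENNReal.ofReal c₂ • ν₂ + ENNReal.ofReal c₃ • ν₃) =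
      c₁ * ∫ x, φ x ∂ν₁ + c₂ * ∫ x, φ x ∂ν₂ + c₃ * ∫ x, φ x ∂ν₃ := by
  have h₁' := h₁.smul_measure (ENNReal.ofReal_ne_top (r := c₁))
  have h₂' := h₂.smul_measure (ENNReal.ofReal_ne_top (r := c₂))
  have h₃' := h₃.smul_measure (ENNReal.ofReal_ne_top (r := c₃))
  rw [integral_add_measure (h₁'.add_measure h₂') h₃', integral_add_measure h₁' h₂',
    integral_smul_measure, integral_smul_measure, integral_smul_measure,
    ENNReal.toReal_ofReal hc₁, ENNReal.toReal_ofReal hc₂, ENNReal.toReal_ofReal hc₃]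
  rfl

theorem isFiniteMeasure_ofReal_smul_add_ofReal_smul_add_ofReal_smul
    {ν₁ ν₂ ν₃ : Measure Ω} [IsFiniteMeasure ν₁] [IsFiniteMeasure ν₂] [IsFiniteMeasure ν₃]
    (c₁ c₂ c₃ : ℝ) :
    IsFiniteMeasure (ENNReal.ofReal c₁ • ν₁ + ENNReal.ofReal c₂ • ν₂ + ENNReal.ofReal c₃ • ν₃) :=
  have := ν₁.smul_finite (ENNReal.ofReal_ne_top (r := c₁))
  have := ν₂.smul_finite (ENNReal.ofReal_ne_top (r := c₂))
  have := ν₃.smul_finite (ENNReal.ofReal_ne_top (r := c₃))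
  inferInstance

end Mixture

theorem feedback_stability_measure_general
    {X Y : Type*} [MeasurableSpace X] [MeasurableSpace Y]
    (μ : Measure X) [IsProbabilityMeasure μ]
    (φ : X × Y → ℝ) (hφm : Measurable φ) (C : ℝ) (hφb : ∀ z, |φ z| ≤ C)
    (n₀ m k : ℝ) (hn₀ : 0 < n₀) (hm : 0 < m) (hk : 0 ≤ k)
    (n : ℕ → ℝ) (hn : ∀ t : ℕ, n t = n₀ + t * (m + k))
    (f : ℕ → X → Y)
    (p : ℕ → Measure (X × Y)) [IsProbabilityMeasure (p 0)]
    (hp : ∀ t : ℕ, 1 ≤ t →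
      p t = ENNReal.ofReal (n (t - 1) / n t) • p (t - 1)
          + ENNReal.ofReal (m / n t) • p 0
          + ENNReal.ofReal (k / n t) • relabel μ (f (t - 1)))
    (δ : ℕ → ℝ)
    (hδ_mono : ∀ s t : ℕ, s ≤ t → δ t ≤ δ s)
    (hcal : ∀ t : ℕ, |∫ z, φ z ∂(p t) - ∫ z, φ z ∂(relabel μ (f t))| ≤ δ t) :
    ∀ t : ℕ, |∫ z, φ z ∂(p 0) - ∫ z, φ z ∂(relabel μ (f t))| ≤ ((m + k) / m) * δ 0 := by
  have hn_pos : ∀ t, 0 < n t := fun t => by rw [hn]; positivity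
  have hn_succ : ∀ s, n (s + 1) = n s + (m + k) := fun s => by rw [hn, hn]; push_cast; ring
  have hp_succ : ∀ s, p (s + 1) = ENNReal.ofReal (n s / n (s + 1)) • p s
      + ENNReal.ofReal (m / n (s + 1)) • p 0
      + ENNReal.ofReal (k / n (s + 1)) • relabel μ (f s) :=
    fun s => by simpa only [Nat.add_sub_cancel] using hp (s + 1) s.succ_pos
  have hp_fin : ∀ t, IsFiniteMeasure (p t) := by
    intro t
    induction t with
    | zero => infer_instance
    | succ s ih =>
      rw [hp_succ]
      exact isFiniteMeasure_ofReal_smul_add_ofReal_smul_add_ofReal_smul _ _ _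
  have hφ_int : ∀ (ν : Measure (X × Y)) [IsFiniteMeasure ν], Integrable φ ν := fun ν _ =>
    .of_bound hφm.aestronglyMeasurable C (.of_forall hφb)
  refine feedback_bias_le hn_pos hn_succ hm hk (fun s => ?_)
    (fun s => (hcal s).trans (hδ_mono 0 s s.zero_le))
  rw [hp_succ]
  exact integral_ofReal_smul_add_ofReal_smul_add_ofReal_smul (hφ_int _) (hφ_int _) (hφ_int _)
    (div_nonneg (hn_pos s).le (hn_pos _).le) (div_nonneg hm.le (hn_pos _).le)
    (div_nonneg hk (hn_pos _).le)

theorem feedback_stability_measure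
    {X Y : Type*} [MeasurableSpace X] [MeasurableSpace Y]
    (μ : Measure X) [IsProbabilityMeasure μ]
    (φ : X × Y → ℝ) (hφm : Measurable φ) (C : ℝ) (hφb : ∀ z, |φ z| ≤ C)
    (n₀ m k : ℝ) (hn₀ : 0 < n₀) (hm : 0 < m) (hk : 0 ≤ k)
    (n : ℕ → ℝ) (hn : ∀ t : ℕ, n t = n₀ + t * (m + k))
    (f : ℕ → X → Y) (hf : ∀ t, Measurable (f t))
    (p : ℕ → Measure (X × Y)) [IsProbabilityMeasure (p 0)]
    (hp : ∀ t : ℕ, 1 ≤ t →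
      p t = ENNReal.ofReal (n (t - 1) / n t) • p (t - 1)
          + ENNReal.ofReal (m / n t) • p 0
          + ENNReal.ofReal (k / n t) • relabel μ (f (t - 1)))
    (δ : ℕ → ℝ)
    (hδ_nonneg : ∀ t, 0 ≤ δ t)
    (hδ_mono : ∀ s t : ℕ, s ≤ t → δ t ≤ δ s)
    (hcal : ∀ t : ℕ, |∫ z, φ z ∂(p t) - ∫ z, φ z ∂(relabel μ (f t))| ≤ δ t) :
    ∀ t : ℕ, |∫ z, φ z ∂(p 0) - ∫ z, φ z ∂(relabel μ (f t))| ≤ ((m + k) / m) * δ 0 :=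
  feedback_stability_measure_general μ φ hφm C hφb n₀ m k hn₀ hm hk n hn f p hp δ hδ_mono hcal
end
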